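/- arXiv:2006.04694 — 4 statements merged into one kernel-verified Lean document; each statement's English description precedes it below -/
import Mathlib

section
/- Let Φ : U → Y be a linear map such that for every index set Q of cardinality less than s, the restriction of Φ to vectors supported on Q is injective. If u solves Φ(u) = y and u has fewer than s/2 nonzero components, then u is the unique solution with fewer than s/2 nonzero components, and every other solution v of Φ(v) = y satisfies ‖v‖₀ > ‖u‖₀. -/
/-- Sparse uniqueness via the spark: if for every support set `Q` of size `< s`
the equation `Φ w = y` has at most one solution supported on `Q`, and `u`
solves `Φ u = y` with fewer than `s/2` nonzero components, then any other
solution `v` has strictly more nonzero components than `u` (so `u` is the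
unique solution with fewer than `s/2` nonzero components). -/
theorem spark_sparse_uniqueness (N : ℕ) (W : Fin N → Type*)
    [∀ i, AddCommGroup (W i)] [∀ i, Module ℝ (W i)]
    (Y : Type*) [AddCommGroup Y] [Module ℝ Y]
    (Φ : (∀ i, W i) →ₗ[ℝ] Y) (s : ℕ)
    (hspark : ∀ Q : Finset (Fin N), Q.card < s →
      ∀ w w' : ∀ i, W i, {i | w i ≠ 0} ⊆ ↑Q → {i | w' i ≠ 0} ⊆ ↑Q →
        Φ w = Φ w' → w = w')
    (y : Y) (u : ∀ i, W i) (hu : Φ u = y)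
    (husparse : 2 * Set.ncard {i | u i ≠ 0} < s) :
    ∀ v : ∀ i, W i, Φ v = y → v ≠ u →
      Set.ncard {i | u i ≠ 0} < Set.ncard {i | v i ≠ 0} ∧
      s ≤ 2 * Set.ncard {i | v i ≠ 0} := by
  intro v hv hvu
  classical
  have hfin : ∀ w : ∀ i, W i, {i | w i ≠ 0}.Finite := fun w => Set.toFinite _
  -- key: if ncard u + ncard v < s then v = u
  have key : Set.ncard {i | u i ≠ 0} + Set.ncard {i | v i ≠ 0} < s → v = u := by
    intro h
    set Q : Finset (Fin N) := (hfin u).toFinset ∪ (hfin v).toFinset with hQ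
    have hcard : Q.card < s := by
      calc Q.card ≤ (hfin u).toFinset.card + (hfin v).toFinset.card :=
            Finset.card_union_le _ _
        _ = Set.ncard {i | u i ≠ 0} + Set.ncard {i | v i ≠ 0} := by
            rw [Set.ncard_eq_toFinset_card', Set.ncard_eq_toFinset_card']
            simp [Set.toFinite_toFinset]
        _ < s := h
    have := hspark Q hcard v u ?_ ?_ (by rw [hv, hu])
    · exact this
    · intro i hi; simp [hQ, Set.Finite.mem_toFinset]; right; exact hi
    · intro i hi; simp [hQ, Set.Finite.mem_toFinset]; left; exact hi
  constructor
  · by_contra hle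
    push_neg at hle
    exact hvu (key (by omega))
  · by_contra hle
    push_neg at hle
    exact hvu (key (by omega))
end

section
/- In a directed graph, let d(a,b) denote the length of a shortest directed walk from a to b in the concatenated graph G ∘ G' (G followed by its transpose with outputs identified), where every walk from a to b' decomposes as a walk from a to some output node z followed by the reverse of a walk from b to z. Then (d(a,a') + d(b,b'))/2 ≤ d(a,b'). -/
/-- `HasWalk E n a b` means there is a directed walk of length `n` from `a`
to `b` along the edge relation `E`. -/
def HasWalk {V : Type*} (E : V → V → Prop) : ℕ → V → V → Prop
  | 0, a, b => a = b
  | n + 1, a, b => ∃ c, E a c ∧ HasWalk E n c b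

/-- Shortest path inequality in `Γ ∘ Γ'`: a walk from `a` to `b'` in the
concatenation of a graph with its transpose decomposes as a walk `a → z` plus
the reverse of a walk `b → z` for some output node `z ∈ Z`.  If `daa`, `dbb`,
`dab` are the shortest such combined lengths for the pairs `(a,a')`, `(b,b')`,
`(a,b')` respectively, then `(daa + dbb)/2 ≤ dab`. -/
theorem shortest_path_coherence_ineq {V : Type*} (E : V → V → Prop)
    (Z : Set V) (a b : V) (daa dbb dab : ℕ)
    (hdaa_min : ∀ n m z, z ∈ Z → HasWalk E n a z → HasWalk E m a z →
      daa ≤ n + m)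
    (hdbb_min : ∀ n m z, z ∈ Z → HasWalk E n b z → HasWalk E m b z →
      dbb ≤ n + m)
    (hdab : ∃ n m z, z ∈ Z ∧ HasWalk E n a z ∧ HasWalk E m b z ∧
      n + m = dab) :
    daa + dbb ≤ 2 * dab := by
  obtain ⟨n, m, z, hz, ha, hb, rfl⟩ := hdab
  -- Going to `z` and back along the same half of an optimal `a → b'` walk is an `a → a'` walk.
  have hdaa : daa ≤ n + n := hdaa_min n n z hz ha ha
  have hdbb : dbb ≤ m + m := hdbb_min m m z hz hb hb
  omega
end

section
/- For a matrix T ∈ ℂ^{P×M} with nonzero columns t₁,…,t_M and mutual coherence μ = max_{i≠j} |⟨tᵢ,tⱼ⟩|/(‖tᵢ‖‖tⱼ‖), every subset of columns of size at most ⌊1/μ⌋ + 1 − 1 (i.e. any set S with card S < 1/μ + 1) is linearly independent; hence spark(T) ≥ 1/μ + 1. -/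
open Finset Matrix

set_option maxHeartbeats 1000000 in
/-- Spark–mutual coherence inequality: if `T` has nonzero columns `t₁,…,t_M`
and mutual coherence bound `μ` (every pair of distinct columns satisfies
`|⟨tᵢ,tⱼ⟩| ≤ μ·‖tᵢ‖·‖tⱼ‖`), then every set `S` of columns with
`card S < 1/μ + 1` is linearly independent; hence `spark T ≥ 1/μ + 1`. -/
theorem spark_coherence_bound (P M : ℕ) (T : Matrix (Fin P) (Fin M) ℂ)
    (hcol : ∀ j : Fin M, (fun k => T k j) ≠ 0)
    (μ : ℝ) (hμpos : 0 < μ)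
    (hμ : ∀ i j : Fin M, i ≠ j →
      ‖∑ k, (starRingEnd ℂ) (T k i) * T k j‖ ≤
        μ * (Real.sqrt (∑ k, ‖T k i‖ ^ 2) *
          Real.sqrt (∑ k, ‖T k j‖ ^ 2))) :
    ∀ S : Finset (Fin M), (S.card : ℝ) < 1 / μ + 1 →
      LinearIndependent ℂ (fun j : S => fun k => T k j) := by
  intro S hS
  rw [Fintype.linearIndependent_iff]
  intro g hg i
  set n : Fin M → ℝ := fun j => Real.sqrt (∑ k, ‖T k j‖ ^ 2) with hn
  have hsumpos : ∀ j : Fin M, 0 < ∑ k, ‖T k j‖ ^ 2 := by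
    intro j
    have : ∃ k, T k j ≠ 0 := by
      by_contra h
      push_neg at h
      exact hcol j (funext fun k => h k)
    obtain ⟨k0, hk0⟩ := this
    apply Finset.sum_pos' (fun k _ => by positivity)
    exact ⟨k0, Finset.mem_univ _, pow_pos (norm_pos_iff.mpr hk0) 2⟩
  have hnpos : ∀ j : Fin M, 0 < n j := fun j => Real.sqrt_pos.mpr (hsumpos j)
  have hnsq : ∀ j : Fin M, n j ^ 2 = ∑ k, ‖T k j‖ ^ 2 := fun j =>
    Real.sq_sqrt (le_of_lt (hsumpos j))
  have hgk : ∀ k : Fin P, ∑ j : S, g j * T k (j : Fin M) = 0 := by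
    intro k
    have := congrFun hg k
    simpa [Finset.sum_apply] using this
  set d : S → ℝ := fun j => ‖g j‖ * n j with hd
  have hdnonneg : ∀ j : S, 0 ≤ d j := fun j => by
    have := (hnpos (j : Fin M)).le
    positivity
  obtain ⟨j0, -, hj0max⟩ :=
    Finset.exists_max_image (Finset.univ : Finset S) d ⟨i, Finset.mem_univ i⟩
  have hj0max' : ∀ j : S, d j ≤ d j0 := fun j => hj0max j (Finset.mem_univ j)
  -- key identity: inner product of the vanishing combination with column j0
  have key : ∑ j : S, g j * (∑ k, (starRingEnd ℂ) (T k (j0 : Fin M)) * T k (j : Fin M)) = 0 := by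
    calc ∑ j : S, g j * (∑ k, (starRingEnd ℂ) (T k (j0 : Fin M)) * T k (j : Fin M))
        = ∑ j : S, ∑ k, g j * ((starRingEnd ℂ) (T k (j0 : Fin M)) * T k (j : Fin M)) := by
          simp [Finset.mul_sum]
      _ = ∑ k, ∑ j : S, g j * ((starRingEnd ℂ) (T k (j0 : Fin M)) * T k (j : Fin M)) :=
          Finset.sum_comm
      _ = ∑ k, (starRingEnd ℂ) (T k (j0 : Fin M)) * ∑ j : S, g j * T k (j : Fin M) := by
          refine Finset.sum_congr rfl fun k _ => ?_
          rw [Finset.mul_sum]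
          exact Finset.sum_congr rfl fun j _ => by ring
      _ = 0 := Finset.sum_eq_zero fun k _ => by rw [hgk k, mul_zero]
  -- self inner product is ‖t_{j0}‖²
  have hself : ∀ z : ℂ, (starRingEnd ℂ) z * z = ((‖z‖ ^ 2 : ℝ) : ℂ) := by
    intro z
    rw [mul_comm, Complex.mul_conj]
    exact congrArg _ (Complex.normSq_eq_norm_sq z)
  have hip00 : (∑ k, (starRingEnd ℂ) (T k (j0 : Fin M)) * T k (j0 : Fin M))
      = ((∑ k, ‖T k (j0 : Fin M)‖ ^ 2 : ℝ) : ℂ) := by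
    rw [Complex.ofReal_sum]
    exact Finset.sum_congr rfl fun k _ => hself _
  -- split off the j0 term
  have hsplit : g j0 * (∑ k, (starRingEnd ℂ) (T k (j0 : Fin M)) * T k (j0 : Fin M))
      = - ∑ j ∈ Finset.univ.erase j0,
          g j * (∑ k, (starRingEnd ℂ) (T k (j0 : Fin M)) * T k (j : Fin M)) := by
    have := Finset.add_sum_erase Finset.univ
      (fun j : S => g j * (∑ k, (starRingEnd ℂ) (T k (j0 : Fin M)) * T k (j : Fin M)))
      (Finset.mem_univ j0)
    rw [key] at this
    linear_combination this
  -- take absolute values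
  have habs : ‖g j0‖ * (∑ k, ‖T k (j0 : Fin M)‖ ^ 2)
      ≤ μ * n (j0 : Fin M) * ∑ j ∈ Finset.univ.erase j0, d j := by
    have h1 : ‖g j0‖ * (∑ k, ‖T k (j0 : Fin M)‖ ^ 2)
        = ‖g j0 * (∑ k, (starRingEnd ℂ) (T k (j0 : Fin M)) * T k (j0 : Fin M))‖ := by
      rw [norm_mul, hip00, Complex.norm_real, Real.norm_of_nonneg (hsumpos _).le]
    rw [h1, hsplit, norm_neg]
    calc ‖∑ j ∈ Finset.univ.erase j0,
            g j * (∑ k, (starRingEnd ℂ) (T k (j0 : Fin M)) * T k (j : Fin M))‖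
        ≤ ∑ j ∈ Finset.univ.erase j0,
            ‖g j * (∑ k, (starRingEnd ℂ) (T k (j0 : Fin M)) * T k (j : Fin M))‖ :=
          norm_sum_le _ _
      _ ≤ ∑ j ∈ Finset.univ.erase j0, ‖g j‖ * (μ * (n (j0 : Fin M) * n (j : Fin M))) := by
          refine Finset.sum_le_sum fun j hj => ?_
          rw [norm_mul]
          refine mul_le_mul_of_nonneg_left ?_ (norm_nonneg _)
          have hne : (j0 : Fin M) ≠ (j : Fin M) := by
            intro h
            exact (Finset.mem_erase.mp hj).1 (Subtype.coe_injective h.symm)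
          exact hμ _ _ hne
      _ = μ * n (j0 : Fin M) * ∑ j ∈ Finset.univ.erase j0, d j := by
          rw [Finset.mul_sum]
          exact Finset.sum_congr rfl fun j _ => by simp [hd]; ring
  -- bound the sum by (card S - 1) * d j0
  have hcard1 : 1 ≤ S.card := Finset.card_pos.mpr ⟨j0, j0.2⟩
  have hcarderase : ((Finset.univ.erase j0).card : ℝ) = (S.card : ℝ) - 1 := by
    rw [Finset.card_erase_of_mem (Finset.mem_univ j0), Finset.card_univ, Fintype.card_coe]
    rw [Nat.cast_sub hcard1]
    norm_num
  have hsumle : ∑ j ∈ Finset.univ.erase j0, d j ≤ ((S.card : ℝ) - 1) * d j0 := by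
    calc ∑ j ∈ Finset.univ.erase j0, d j
        ≤ (Finset.univ.erase j0).card • d j0 :=
          Finset.sum_le_card_nsmul _ _ _ fun j _ => hj0max' j
      _ = ((S.card : ℝ) - 1) * d j0 := by rw [nsmul_eq_mul, hcarderase]
  -- assemble
  have hmain : d j0 * n (j0 : Fin M) ≤ μ * n (j0 : Fin M) * (((S.card : ℝ) - 1) * d j0) := by
    have h2 : d j0 * n (j0 : Fin M) = ‖g j0‖ * (∑ k, ‖T k (j0 : Fin M)‖ ^ 2) := by
      rw [hd]
      simp only
      rw [← hnsq]
      ring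
    rw [h2]
    refine le_trans habs ?_
    have hnn : 0 ≤ μ * n (j0 : Fin M) := by positivity
    exact mul_le_mul_of_nonneg_left hsumle hnn
  have hnj0 := hnpos (j0 : Fin M)
  have hdle : d j0 ≤ μ * ((S.card : ℝ) - 1) * d j0 := by
    have := hmain
    nlinarith
  have hμcard : μ * ((S.card : ℝ) - 1) < 1 := by
    have h3 : (S.card : ℝ) - 1 < 1 / μ := by linarith
    calc μ * ((S.card : ℝ) - 1) < μ * (1 / μ) := by
          rcases lt_or_ge ((S.card : ℝ) - 1) (1/μ) with h | h
          · exact mul_lt_mul_of_pos_left h3 hμpos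
          · linarith
      _ = 1 := by field_simp
  have hdzero : d j0 = 0 := by
    have hnn := hdnonneg j0
    nlinarith
  have hdi : d i = 0 := le_antisymm (hdzero ▸ hj0max' i) (hdnonneg i)
  have : ‖g i‖ * n (i : Fin M) = 0 := hdi
  have : ‖g i‖ = 0 := by
    rcases mul_eq_zero.mp this with h | h
    · exact h
    · exact absurd h (hnpos _).ne'
  exact norm_eq_zero.mp this
end

section
/- Let Φ be a linear map between finite direct sums of normed spaces satisfying the RIP of order 2k with constant δ_{2k} < 1: for all k-sparse u, v, (1−δ_{2k})‖u−v‖₂² ≤ ‖Φ(u)−Φ(v)‖₂² and ‖Φ(u)+Φ(v)‖₂² ≤ (1+δ_{2k})‖u+v‖₂² (norms taken on component-norm vectors). Then for any u, v that are k-sparse with disjoint supports and unit ℓ²-component-norm, the inner product of the component-norm vectors of Φ(u) and Φ(v) satisfies ⟨|Φ(u)|, |Φ(v)|⟩ ≤ δ_{2k}·‖u‖₂·‖v‖₂. -/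
/-!
On vectors with disjoint supports, `(|u| + |v|)` and `(|u| - |v|)` both have squared `ℓ²` norm
`‖u‖² + ‖v‖²`. Polarization writes `4 ⟨|Φu|, |Φv|⟩` as `‖|Φu| + |Φv|‖² - ‖|Φu| - |Φv|‖²`, which
the two RIP inequalities bound by `(1 + δ)(‖u‖² + ‖v‖²) - (1 - δ)(‖u‖² + ‖v‖²) = 4δ` for unit `u, v`.
-/

open Finset

/-- A vector of `ℝ^N` is `k`-sparse if it has at most `k` nonzero components. -/
def IsKSparse {N : ℕ} (k : ℕ) (u : Fin N → ℝ) : Prop :=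
  (Finset.univ.filter (fun i => u i ≠ 0)).card ≤ k

section DisjointSupport

variable {ι : Type*} [Fintype ι] {f g : ι → ℝ}

lemma sq_abs_add_abs_of_eq_zero_or_eq_zero {a b : ℝ} (h : a = 0 ∨ b = 0) :
    (|a| + |b|) ^ 2 = a ^ 2 + b ^ 2 := by
  rcases h with rfl | rfl <;> simp

lemma sq_abs_sub_abs_of_eq_zero_or_eq_zero {a b : ℝ} (h : a = 0 ∨ b = 0) :
    (|a| - |b|) ^ 2 = a ^ 2 + b ^ 2 := by
  rcases h with rfl | rfl <;> simp

lemma sum_sq_abs_add_abs_of_disjoint (h : ∀ i, f i = 0 ∨ g i = 0) :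
    ∑ i, (|f i| + |g i|) ^ 2 = ∑ i, f i ^ 2 + ∑ i, g i ^ 2 := by
  simp only [sq_abs_add_abs_of_eq_zero_or_eq_zero (h _), sum_add_distrib]

lemma sum_sq_abs_sub_abs_of_disjoint (h : ∀ i, f i = 0 ∨ g i = 0) :
    ∑ i, (|f i| - |g i|) ^ 2 = ∑ i, f i ^ 2 + ∑ i, g i ^ 2 := by
  simp only [sq_abs_sub_abs_of_eq_zero_or_eq_zero (h _), sum_add_distrib]

end DisjointSupport

lemma sum_sq_add_sub_sum_sq_sub {ι : Type*} (s : Finset ι) (x y : ι → ℝ) :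
    ∑ i ∈ s, (x i + y i) ^ 2 - ∑ i ∈ s, (x i - y i) ^ 2 = 4 * ∑ i ∈ s, x i * y i := by
  rw [← sum_sub_distrib, mul_sum]
  exact sum_congr rfl fun _ _ => by ring

theorem rip_inner_product_bound_general (N P k : ℕ)
    (Φ : (Fin N → ℝ) →ₗ[ℝ] (Fin P → ℝ)) (δ : ℝ)
    (hRIP : ∀ u v : Fin N → ℝ, IsKSparse k u → IsKSparse k v →
      (1 - δ) * (∑ i, (|u i| - |v i|) ^ 2) ≤ (∑ j, (|Φ u j| - |Φ v j|) ^ 2) ∧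
      (∑ j, (|Φ u j| + |Φ v j|) ^ 2) ≤ (1 + δ) * (∑ i, (|u i| + |v i|) ^ 2))
    (u v : Fin N → ℝ) (hu : IsKSparse k u) (hv : IsKSparse k v)
    (hdisj : ∀ i, u i = 0 ∨ v i = 0)
    (hu1 : Real.sqrt (∑ i, (u i) ^ 2) = 1)
    (hv1 : Real.sqrt (∑ i, (v i) ^ 2) = 1) :
    ∑ j, |Φ u j| * |Φ v j| ≤
      δ * Real.sqrt (∑ i, (u i) ^ 2) * Real.sqrt (∑ i, (v i) ^ 2) := by
  obtain ⟨hlower, hupper⟩ := hRIP u v hu hv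
  have hu_sq : ∑ i, u i ^ 2 = 1 := Real.sqrt_eq_one.mp hu1
  have hv_sq : ∑ i, v i ^ 2 = 1 := Real.sqrt_eq_one.mp hv1
  rw [sum_sq_abs_sub_abs_of_disjoint hdisj, hu_sq, hv_sq] at hlower
  rw [sum_sq_abs_add_abs_of_disjoint hdisj, hu_sq, hv_sq] at hupper
  have hpolar := sum_sq_add_sub_sum_sq_sub univ (fun j => |Φ u j|) (fun j => |Φ v j|)
  rw [hu1, hv1]
  linarith

/-- RIP implies near-orthogonality: if a linear map `Φ : ℝ^N → ℝ^P` satisfies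
the RIP of order `2k` with constant `δ ∈ (0,1)` (norms taken on the vectors of
component norms, i.e. absolute values), then for `k`-sparse `u, v` with
disjoint supports and unit `ℓ²` norm, `⟨|Φu|, |Φv|⟩ ≤ δ·‖u‖₂·‖v‖₂`. -/
theorem rip_inner_product_bound (N P k : ℕ)
    (Φ : (Fin N → ℝ) →ₗ[ℝ] (Fin P → ℝ)) (δ : ℝ) (hδ0 : 0 < δ) (hδ1 : δ < 1)
    (hRIP : ∀ u v : Fin N → ℝ, IsKSparse k u → IsKSparse k v →
      (1 - δ) * (∑ i, (|u i| - |v i|) ^ 2) ≤ (∑ j, (|Φ u j| - |Φ v j|) ^ 2) ∧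
      (∑ j, (|Φ u j| + |Φ v j|) ^ 2) ≤ (1 + δ) * (∑ i, (|u i| + |v i|) ^ 2))
    (u v : Fin N → ℝ) (hu : IsKSparse k u) (hv : IsKSparse k v)
    (hdisj : ∀ i, u i = 0 ∨ v i = 0)
    (hu1 : Real.sqrt (∑ i, (u i) ^ 2) = 1)
    (hv1 : Real.sqrt (∑ i, (v i) ^ 2) = 1) :
    ∑ j, |Φ u j| * |Φ v j| ≤
      δ * Real.sqrt (∑ i, (u i) ^ 2) * Real.sqrt (∑ i, (v i) ^ 2) :=
  rip_inner_product_bound_general N P k Φ δ hRIP u v hu hv hdisj hu1 hv1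
end
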